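/- Let F be a rigid field of level s(F) = 2 and let φ, ψ be quadratic forms over F such that φ ⊥ ψ is anisotropic. Then D_F(φ ⊥ ψ) = D_F(φ) ∪ D_F(ψ) ∪ { x ∈ F* : −x ∈ D_F(φ) ∩ D_F(ψ) }. -/

import Mathlib

namespace PN

variable (F : Type*) [Field F]

/-- The diagonal quadratic form with diagonal entries given by a list. -/
noncomputable def qf (l : List F) : QuadraticForm F (Fin l.length → F) :=
  QuadraticMap.weightedSumSquares F l.get

/-- Isometry of diagonal quadratic forms. -/
def Isom (l l' : List F) : Prop :=
  Nonempty (QuadraticMap.IsometryEquiv (qf F l) (qf F l'))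

/-- Diagonalization of the sum of `k` hyperbolic planes. -/
def hypList (k : ℕ) : List F :=
  List.replicate k (1 : F) ++ List.replicate k (-1 : F)

/-- A (diagonalized) form is hyperbolic if it is isometric to a sum of hyperbolic planes. -/
def IsHyp (l : List F) : Prop := ∃ k : ℕ, Isom F l (hypList F k)

def negList (l : List F) : List F := l.map (fun x => -x)

/-- Witt equivalence of diagonalized quadratic forms. -/
def WittEquiv (l l' : List F) : Prop := IsHyp F (l ++ negList F l')

/-- Nondegeneracy: all diagonal entries are nonzero. -/
def Nondeg (l : List F) : Prop := ∀ x ∈ l, x ≠ 0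

/-- Diagonalization of the Pfister form `⟪a₁,…,aₙ⟫ = ⟨1,-a₁⟩⊗⋯⊗⟨1,-aₙ⟩`. -/
def pfister : List F → List F
  | [] => [1]
  | a :: l => pfister l ++ (pfister l).map (fun x => -a * x)

/-- `l` is a diagonalization of an `n`-fold Pfister form. -/
def IsPfister (n : ℕ) (l : List F) : Prop :=
  ∃ a : Fin n → F, (∀ i, a i ≠ 0) ∧ l = pfister F (List.ofFn a)

/-- `l` is a diagonalization of a form similar to an `n`-fold Pfister form. -/
def IsGP (n : ℕ) (l : List F) : Prop :=
  ∃ c : F, c ≠ 0 ∧ ∃ p : List F, IsPfister F n p ∧ l = p.map (fun x => c * x)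

/-- The Witt class of `l` lies in `IⁿF`, i.e. it is a sum of classes of
forms similar to `n`-fold Pfister forms. -/
def InI (n : ℕ) (l : List F) : Prop :=
  ∃ L : List (List F), (∀ p ∈ L, IsGP F n p) ∧ WittEquiv F l L.flatten

/-- The (scaled) `n`-Pfister number of `l` (`⊤` if the Witt class of `l` is not in `IⁿF`). -/
noncomputable def GPnum (n : ℕ) (l : List F) : ℕ∞ :=
  sInf {k : ℕ∞ | ∃ L : List (List F), (L.length : ℕ∞) = k ∧
    (∀ p ∈ L, IsGP F n p) ∧ WittEquiv F l L.flatten}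

/-- The unscaled `n`-Pfister number: least number of genuine `n`-fold Pfister
forms with signs `±1` whose Witt classes sum to that of `l`. -/
noncomputable def Pnum (n : ℕ) (l : List F) : ℕ∞ :=
  sInf {k : ℕ∞ | ∃ L : List (List F), (L.length : ℕ∞) = k ∧
    (∀ p ∈ L, IsPfister F n p ∨ ∃ q : List F, IsPfister F n q ∧ p = negList F q) ∧
    WittEquiv F l L.flatten}

/-- `GP_n(F, d)`: the supremum of `n`-Pfister numbers of forms in `IⁿF` of dimension `≤ d`. -/
noncomputable def GPsup (n : ℕ) (d : ℕ) : ℕ∞ :=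
  ⨆ l ∈ {l : List F | Nondeg F l ∧ InI F n l ∧ l.length ≤ d}, GPnum F n l

/-- `a` is a nonzero value represented by the form `l`. -/
def Represents (l : List F) (a : F) : Prop := a ≠ 0 ∧ ∃ x, qf F l x = a

/-- The set of nonzero represented values. -/
def D (l : List F) : Set F := {a | Represents F l a}

def Anisotropic (l : List F) : Prop := (qf F l).Anisotropic

def SameSquareClass (a b : F) : Prop := ∃ c : F, c ≠ 0 ∧ a = b * c ^ 2

/-- A field is rigid if every anisotropic binary form represents at most two square classes. -/
def Rigid : Prop := ∀ x y : F, x ≠ 0 → y ≠ 0 → Anisotropic F [x, y] →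
  ∃ u v : F, ∀ a : F, Represents F [x, y] a →
    SameSquareClass F a u ∨ SameSquareClass F a v

/-- The level `s(F)`: the least `n` such that `-1` is a sum of `n` squares (`⊤` if none). -/
noncomputable def level : ℕ∞ :=
  sInf {m : ℕ∞ | ∃ n : ℕ, m = (n : ℕ∞) ∧ ∃ f : Fin n → F, (-1 : F) = ∑ i, f i ^ 2}

/-- `l` is (isometric to) a subform of `l'`. -/
def Subform (l l' : List F) : Prop := ∃ r : List F, Isom F l' (l ++ r)

end PN

/-! Write a value of `φ ⊥ ψ` as `a + b` with `a` represented by `φ` and `b` by `ψ`; if `a = 0` or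
`b = 0` there is nothing to do. Otherwise `⟨a, b⟩` is anisotropic, so by rigidity `a`, `b`, `a + b`
lie in at most two square classes. If `a + b` is in the class of neither `a` nor `b`, then `a` and
`b` share a class, so `⟨a, b⟩ ≅ a⟨1, 1⟩` also represents `-a` (`-1` is a sum of two squares),
which is not in the class of `a` (`-1` is not a square); hence `a + b` is in the class of `-a`.
Conversely, if `-x` is represented by both `φ` and `ψ`, then so is `x = (-x)(p² + q²)` by
`φ ⊥ ψ`, where `p² + q² = -1`. -/

namespace PN

variable {F : Type*} [Field F]

section SquareClass

@[symm]
lemma SameSquareClass.symm {a b : F} (h : SameSquareClass F a b) : SameSquareClass F b a := by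
  obtain ⟨c, hc, rfl⟩ := h
  exact ⟨c⁻¹, inv_ne_zero hc, by field_simp⟩

lemma SameSquareClass.trans {a b c : F} (h : SameSquareClass F a b)
    (h' : SameSquareClass F b c) : SameSquareClass F a c := by
  obtain ⟨d, hd, rfl⟩ := h
  obtain ⟨e, he, rfl⟩ := h'
  exact ⟨e * d, mul_ne_zero he hd, by ring⟩

lemma SameSquareClass.neg {a b : F} (h : SameSquareClass F a b) :
    SameSquareClass F (-a) (-b) := by
  obtain ⟨c, hc, rfl⟩ := h
  exact ⟨c, hc, by ring⟩

lemma not_sameSquareClass_neg_self {a : F} (ha : a ≠ 0) (hsq : ∀ c : F, c ^ 2 ≠ -1) :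
    ¬ SameSquareClass F (-a) a := by
  rintro ⟨c, -, h⟩
  exact hsq c (mul_left_cancel₀ ha (by linear_combination -h))

end SquareClass

section Level

lemma exists_sum_sq_eq_neg_one_of_level_eq {n : ℕ} (h : level F = n) :
    ∃ f : Fin n → F, (-1 : F) = ∑ i, f i ^ 2 := by
  set S : Set ℕ∞ := {m | ∃ n : ℕ, m = (n : ℕ∞) ∧ ∃ f : Fin n → F, (-1 : F) = ∑ i, f i ^ 2}
  have hS : S.Nonempty := by
    by_contra hS
    rw [Set.not_nonempty_iff_eq_empty] at hS
    have : level F = ⊤ := by simp [level, S, hS]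
    simp [this] at h
  obtain ⟨m, hm, f, hf⟩ := (h ▸ csInf_mem hS : (n : ℕ∞) ∈ S)
  obtain rfl : n = m := by exact_mod_cast hm
  exact ⟨f, hf⟩

lemma sq_ne_neg_one_of_one_lt_level (h : 1 < level F) (c : F) : c ^ 2 ≠ -1 := by
  intro hc
  have : level F ≤ 1 := sInf_le ⟨1, by norm_num, ![c], by simp [hc]⟩
  exact absurd h this.not_gt

end Level

section Append

def appendEquiv (l l' : List F) :
    (Fin l.length → F) × (Fin l'.length → F) ≃ (Fin (l ++ l').length → F) :=
  (Fin.appendEquiv _ _).trans (Equiv.arrowCongr (finCongr List.length_append.symm) (Equiv.refl F))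

lemma qf_apply (l : List F) (x : Fin l.length → F) :
    qf F l x = ∑ i, l.get i * (x i * x i) := by
  simp [qf, QuadraticMap.weightedSumSquares_apply, smul_eq_mul]

lemma qf_appendEquiv (l l' : List F) (x : Fin l.length → F) (y : Fin l'.length → F) :
    qf F (l ++ l') (appendEquiv l l' (x, y)) = qf F l x + qf F l' y := by
  simp only [qf_apply, ← Fin.sum_congr' _ List.length_append.symm, Fin.sum_univ_add]
  simp [appendEquiv, List.getElem_append_right]

lemma appendEquiv_zero (l l' : List F) : appendEquiv l l' (0, 0) = 0 := by
  have h : Fin.append (0 : Fin l.length → F) (0 : Fin l'.length → F) = 0 := by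
    ext j
    refine Fin.addCases (fun j => ?_) (fun j => ?_) j <;> simp
  ext i
  simp [appendEquiv, h]

lemma mem_D_append_iff {l l' : List F} {a : F} :
    a ∈ D F (l ++ l') ↔ a ≠ 0 ∧ ∃ x y, qf F l x + qf F l' y = a := by
  simp only [D, Represents, Set.mem_ofPred_eq, (appendEquiv l l').surjective.exists, Prod.exists,
    qf_appendEquiv]

lemma Anisotropic.eq_zero_of_add_eq_zero {l l' : List F} (h : Anisotropic F (l ++ l'))
    {x : Fin l.length → F} {y : Fin l'.length → F} (hxy : qf F l x + qf F l' y = 0) :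
    x = 0 ∧ y = 0 := by
  rw [← qf_appendEquiv] at hxy
  simpa [← appendEquiv_zero l l'] using h _ hxy

lemma D_subset_D_append_left (l l' : List F) : D F l ⊆ D F (l ++ l') := by
  rintro a ⟨ha, x, rfl⟩
  exact mem_D_append_iff.2 ⟨ha, x, 0, by simp⟩

lemma D_subset_D_append_right (l l' : List F) : D F l' ⊆ D F (l ++ l') := by
  rintro a ⟨ha, y, rfl⟩
  exact mem_D_append_iff.2 ⟨ha, 0, y, by simp⟩

lemma mem_D_append_of_neg_mem {l l' : List F} {p q a : F} (hpq : p ^ 2 + q ^ 2 = -1)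
    (ha : a ≠ 0) (hl : -a ∈ D F l) (hl' : -a ∈ D F l') : a ∈ D F (l ++ l') := by
  obtain ⟨-, x, hx⟩ := hl
  obtain ⟨-, y, hy⟩ := hl'
  refine mem_D_append_iff.2 ⟨ha, p • x, q • y, ?_⟩
  simp only [QuadraticMap.map_smul, hx, hy, smul_eq_mul]
  linear_combination (-a) * hpq

end Append

lemma mem_D_of_sameSquareClass {l : List F} {a b : F} (ha : a ∈ D F l)
    (h : SameSquareClass F b a) : b ∈ D F l := by
  obtain ⟨ha0, x, rfl⟩ := ha
  obtain ⟨c, hc, rfl⟩ := h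
  exact ⟨mul_ne_zero ha0 (pow_ne_zero 2 hc), c • x, by simp [QuadraticMap.map_smul]; ring⟩

lemma Anisotropic.nondeg {l : List F} (h : Anisotropic F l) : Nondeg F l := by
  intro a ha ha0
  obtain ⟨i, rfl⟩ := List.mem_iff_get.1 ha
  have := h (Pi.single i 1) (by simpa [qf_apply, Pi.single_apply] using ha0)
  simpa using congrFun this i

section Binary

lemma qf_pair (a b : F) (w : Fin 2 → F) : qf F [a, b] w = a * w 0 ^ 2 + b * w 1 ^ 2 := by
  rw [qf_apply]
  simp [Fin.sum_univ_two, sq]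

lemma represents_pair {a b c : F} (s t : F) (hc : c = a * s ^ 2 + b * t ^ 2) (hc0 : c ≠ 0) :
    Represents F [a, b] c :=
  ⟨hc0, ![s, t], by rw [qf_pair]; simp [hc]⟩

lemma Anisotropic.pair_of_append {l l' : List F} (h : Anisotropic F (l ++ l'))
    {x : Fin l.length → F} {y : Fin l'.length → F} (hx : qf F l x ≠ 0) (hy : qf F l' y ≠ 0) :
    Anisotropic F [qf F l x, qf F l' y] := by
  intro w hw
  rw [qf_pair] at hw
  obtain ⟨hx0, hy0⟩ := h.eq_zero_of_add_eq_zero (x := w 0 • x) (y := w 1 • y)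
    (by simp only [QuadraticMap.map_smul, smul_eq_mul]; linear_combination hw)
  have hx' : x ≠ 0 := by rintro rfl; simp at hx
  have hy' : y ≠ 0 := by rintro rfl; simp at hy
  ext i
  fin_cases i
  · exact (smul_eq_zero.1 hx0).resolve_right hx'
  · exact (smul_eq_zero.1 hy0).resolve_right hy'

lemma Rigid.sameSquareClass_of_represents (hrigid : Rigid F) {a b : F}
    (hab : Anisotropic F [a, b]) {x y z : F} (hx : Represents F [a, b] x)
    (hy : Represents F [a, b] y) (hz : Represents F [a, b] z) :
    SameSquareClass F x y ∨ SameSquareClass F x z ∨ SameSquareClass F y z := by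
  have hne := hab.nondeg
  obtain ⟨u, v, huv⟩ := hrigid a b (hne a (by simp)) (hne b (by simp)) hab
  rcases huv x hx with hxu | hxv <;> rcases huv y hy with hyu | hyv <;>
    rcases huv z hz with hzu | hzv
  all_goals first
    | exact Or.inl (hxu.trans hyu.symm)
    | exact Or.inl (hxv.trans hyv.symm)
    | exact Or.inr (Or.inl (hxu.trans hzu.symm))
    | exact Or.inr (Or.inl (hxv.trans hzv.symm))
    | exact Or.inr (Or.inr (hyu.trans hzu.symm))
    | exact Or.inr (Or.inr (hyv.trans hzv.symm))

lemma Rigid.add_sameSquareClass (hrigid : Rigid F) (hlevel : level F = 2) {a b : F}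
    (hab : Anisotropic F [a, b]) :
    SameSquareClass F (a + b) a ∨ SameSquareClass F (a + b) b ∨
      SameSquareClass F (-(a + b)) a ∧ SameSquareClass F (-(a + b)) b := by
  have ha : a ≠ 0 := hab.nondeg a (by simp)
  have hb : b ≠ 0 := hab.nondeg b (by simp)
  have hsum : a + b ≠ 0 := fun h => by
    simpa using congrFun (hab ![1, 1] (by rw [qf_pair]; simp [h])) 0
  have hra : Represents F [a, b] a := represents_pair 1 0 (by ring) ha
  have hrb : Represents F [a, b] b := represents_pair 0 1 (by ring) hb
  have hrsum : Represents F [a, b] (a + b) := represents_pair 1 1 (by ring) hsum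
  rcases hrigid.sameSquareClass_of_represents hab hra hrb hrsum with ⟨c, -, rfl⟩ | h | h
  · obtain ⟨f, hf⟩ := exists_sum_sq_eq_neg_one_of_level_eq (F := F) (n := 2) hlevel
    rw [Fin.sum_univ_two] at hf
    -- `-a = a (f₀² + f₁²)`, and `a` differs from `b` by the square `c²`.
    have hrneg : Represents F [b * c ^ 2, b] (-(b * c ^ 2)) :=
      represents_pair (f 0) (c * f 1) (by linear_combination b * c ^ 2 * hf) (neg_ne_zero.2 ha)
    have hsq := sq_ne_neg_one_of_one_lt_level (F := F) (by rw [hlevel]; norm_num)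
    rcases hrigid.sameSquareClass_of_represents hab hra hrneg hrsum with h | h | h
    · exact absurd h.symm (not_sameSquareClass_neg_self ha hsq)
    · exact Or.inl h.symm
    · have h' : SameSquareClass F (-(b * c ^ 2 + b)) (b * c ^ 2) := by
        simpa using h.symm.neg
      exact Or.inr (Or.inr ⟨h', h'.trans ⟨c, by rintro rfl; simp at ha, rfl⟩⟩)
  · exact Or.inl h.symm
  · exact Or.inr (Or.inl h.symm)

end Binary

lemma D_append_subset_of_rigid (hrigid : Rigid F) (hlevel : level F = 2) {l l' : List F}
    (han : Anisotropic F (l ++ l')) :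
    D F (l ++ l') ⊆ D F l ∪ D F l' ∪ {a | a ≠ 0 ∧ -a ∈ D F l ∩ D F l'} := by
  intro c hc
  obtain ⟨hc0, x, y, rfl⟩ := mem_D_append_iff.1 hc
  by_cases hx : qf F l x = 0
  · exact Or.inl (Or.inr ⟨hc0, y, by simp [hx]⟩)
  by_cases hy : qf F l' y = 0
  · exact Or.inl (Or.inl ⟨hc0, x, by simp [hy]⟩)
  have hxD : qf F l x ∈ D F l := ⟨hx, x, rfl⟩
  have hyD : qf F l' y ∈ D F l' := ⟨hy, y, rfl⟩
  rcases hrigid.add_sameSquareClass hlevel (han.pair_of_append hx hy) with h | h | ⟨h, h'⟩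
  · exact Or.inl (Or.inl (mem_D_of_sameSquareClass hxD h))
  · exact Or.inl (Or.inr (mem_D_of_sameSquareClass hyD h))
  · exact Or.inr ⟨hc0, mem_D_of_sameSquareClass hxD h, mem_D_of_sameSquareClass hyD h'⟩

end PN

theorem stmt_12_general (F : Type*) [Field F]
    (hrigid : PN.Rigid F) (hlevel : PN.level F = 2)
    (φ ψ : List F)
    (han : PN.Anisotropic F (φ ++ ψ)) :
    PN.D F (φ ++ ψ) =
      PN.D F φ ∪ PN.D F ψ ∪ {x : F | x ≠ 0 ∧ -x ∈ PN.D F φ ∩ PN.D F ψ} := by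
  obtain ⟨f, hf⟩ := PN.exists_sum_sq_eq_neg_one_of_level_eq (F := F) (n := 2) hlevel
  rw [Fin.sum_univ_two] at hf
  refine (PN.D_append_subset_of_rigid hrigid hlevel han).antisymm ?_
  rintro a ((ha | ha) | ⟨ha0, hl, hl'⟩)
  · exact PN.D_subset_D_append_left φ ψ ha
  · exact PN.D_subset_D_append_right φ ψ ha
  · exact PN.mem_D_append_of_neg_mem hf.symm ha0 hl hl'

theorem stmt_12 (F : Type*) [Field F] (hF : (2 : F) ≠ 0)
    (hrigid : PN.Rigid F) (hlevel : PN.level F = 2)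
    (φ ψ : List F) (hφ : PN.Nondeg F φ) (hψ : PN.Nondeg F ψ)
    (han : PN.Anisotropic F (φ ++ ψ)) :
    PN.D F (φ ++ ψ) =
      PN.D F φ ∪ PN.D F ψ ∪ {x : F | x ≠ 0 ∧ -x ∈ PN.D F φ ∩ PN.D F ψ} :=
  stmt_12_general F hrigid hlevel φ ψ han
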